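/- arXiv:1811.08147 — 3 statements merged into one kernel-verified Lean document; each statement's English description precedes it below -/
import Mathlib

section
/- Every finite bipartite regular graph of positive degree admits a proper edge-coloring using exactly as many colors as its degree. -/
open Finset

section Konig

variable {V : Type} [Fintype V] [DecidableEq V]

/-- Incidence count equals neighbor count. -/
lemma konig_nbr_card (E : Finset (Sym2 V)) (v : V) :
    (Finset.univ.filter (fun b => s(v, b) ∈ E)).card
      = (E.filter (fun e => v ∈ e)).card := by
  apply Finset.card_bij (fun b _ => s(v, b))
  · intro b hb
    simp only [mem_filter, mem_univ, true_and] at hb ⊢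
    exact ⟨hb, Sym2.mem_mk_left _ _⟩
  · intro b hb b' hb' h
    rcases Sym2.eq_iff.mp h with ⟨-, h'⟩ | ⟨h1, h2⟩
    · exact h'
    · rw [h2, h1]
  · intro e he
    simp only [mem_filter] at he
    obtain ⟨b, rfl⟩ := Sym2.mem_iff_exists.mp he.2
    exact ⟨b, by simp [he.1], rfl⟩

/-- Key induction lemma for König's edge-coloring theorem. -/
lemma konig_key : ∀ (k : ℕ) (E : Finset (Sym2 V)) (side : V → Bool),
    (∀ a b : V, s(a, b) ∈ E → side a ≠ side b) →
    (∀ v : V, (E.filter (fun e => v ∈ e)).card = k) →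
    ∃ f : {e // e ∈ E} → Fin k, ∀ e₁ e₂ : {e // e ∈ E}, e₁ ≠ e₂ →
      (∃ v : V, v ∈ e₁.1 ∧ v ∈ e₂.1) → f e₁ ≠ f e₂ := by
  intro k
  induction k with
  | zero =>
    intro E side hbip hdeg
    have hE : E = ∅ := by
      by_contra h
      obtain ⟨e, he⟩ := Finset.nonempty_iff_ne_empty.2 h
      induction e using Sym2.ind with
      | _ a b =>
        have h1 := hdeg a
        have h2 : s(a, b) ∈ E.filter (fun e => a ∈ e) := by simp [he]
        rw [Finset.card_eq_zero] at h1
        simp [h1] at h2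
    subst hE
    exact ⟨fun e => (Finset.notMem_empty _ e.2).elim,
      fun e₁ => (Finset.notMem_empty _ e₁.2).elim⟩
  | succ k ih =>
    intro E side hbip hdeg
    have two_mem : ∀ (x y : V) (e : Sym2 V), e ∈ E → x ≠ y → x ∈ e → y ∈ e →
        side x ≠ side y := by
      intro x y e he hxy hx hy
      have : e = s(x, y) := (Sym2.mem_and_mem_iff hxy).mp ⟨hx, hy⟩
      exact hbip x y (this ▸ he)
    set A : Finset V := Finset.univ.filter (fun v => side v = true) with hA
    set B : Finset V := Finset.univ.filter (fun v => side v = false) with hB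
    set t : ↥A → Finset V := fun a => Finset.univ.filter (fun b => s(a.1, b) ∈ E) with ht
    have hAside : ∀ a : ↥A, side a.1 = true := by
      intro a
      exact (Finset.mem_filter.mp a.2).2
    -- Hall condition
    have hall : ∀ s : Finset ↥A, s.card ≤ (s.biUnion t).card := by
      intro s
      set N := s.biUnion t with hN
      have hsub : s.biUnion (fun a => E.filter (fun e => a.1 ∈ e)) ⊆
          N.biUnion (fun b => E.filter (fun e => b ∈ e)) := by
        intro e he
        simp only [Finset.mem_biUnion, mem_filter] at he ⊢
        obtain ⟨a, has, heE, hae⟩ := he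
        obtain ⟨b, rfl⟩ := Sym2.mem_iff_exists.mp hae
        refine ⟨b, ?_, heE, Sym2.mem_mk_right _ _⟩
        exact Finset.mem_biUnion.mpr ⟨a, has, by simp [ht, heE]⟩
      have h1 : (s.biUnion (fun a => E.filter (fun e => a.1 ∈ e))).card
          = s.card * (k + 1) := by
        rw [Finset.card_biUnion]
        · rw [Finset.sum_congr rfl (fun a _ => hdeg a.1), Finset.sum_const, smul_eq_mul]
        · intro a _ b _ hab
          have hval : a.1 ≠ b.1 := fun h => hab (Subtype.ext h)
          simp only [Finset.disjoint_left, mem_filter]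
          rintro e ⟨heE, hae⟩ ⟨-, hbe⟩
          exact two_mem a.1 b.1 e heE hval hae hbe (by rw [hAside a, hAside b])
      have h2 : (N.biUnion (fun b => E.filter (fun e => b ∈ e))).card
          ≤ N.card * (k + 1) := by
        calc (N.biUnion (fun b => E.filter (fun e => b ∈ e))).card
            ≤ ∑ b ∈ N, (E.filter (fun e => b ∈ e)).card := Finset.card_biUnion_le
          _ = N.card * (k + 1) := by
              rw [Finset.sum_congr rfl (fun b _ => hdeg b), Finset.sum_const, smul_eq_mul]
      have := (h1 ▸ Finset.card_le_card hsub).trans h2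
      exact Nat.le_of_mul_le_mul_right this (Nat.succ_pos k)
    obtain ⟨g, hginj, hg⟩ := (Finset.all_card_le_biUnion_card_iff_existsInjective' t).mp hall
    have hgE : ∀ a : ↥A, s(a.1, g a) ∈ E := by
      intro a; have := hg a; simpa [ht] using this
    have hgside : ∀ a : ↥A, side (g a) = false := by
      intro a
      have h := hbip a.1 (g a) (hgE a)
      rw [hAside a] at h
      exact Bool.eq_false_iff.mpr (fun hh => h hh.symm)
    -- |A| = |B| via double counting of E
    have hsidecard : ∀ (s : Finset V) (bv : Bool), (∀ x, x ∈ s ↔ side x = bv) →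
        E.card = s.card * (k + 1) := by
      intro s bv hs
      have hE : E = s.biUnion (fun a => E.filter (fun e => a ∈ e)) := by
        apply Finset.Subset.antisymm
        · intro e he
          induction e using Sym2.ind with
          | _ a b =>
            have hne := hbip a b he
            have hone : side a = bv ∨ side b = bv := by
              rcases Bool.eq_false_or_eq_true bv with rfl | rfl <;>
                rcases Bool.eq_false_or_eq_true (side a) with h1 | h1 <;>
                  rcases Bool.eq_false_or_eq_true (side b) with h2 | h2 <;>
                    first
                      | exact Or.inl h1
                      | exact Or.inr h2
                      | exact absurd (h1.trans h2.symm) hne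
            rcases hone with h1 | h1
            · exact Finset.mem_biUnion.mpr ⟨a, (hs a).mpr h1, by simp [he]⟩
            · exact Finset.mem_biUnion.mpr ⟨b, (hs b).mpr h1, by simp [he]⟩
        · intro e he
          simp only [Finset.mem_biUnion, mem_filter] at he
          obtain ⟨a, _, heE, _⟩ := he
          exact heE
      rw [hE, Finset.card_biUnion]
      · rw [Finset.sum_congr rfl (fun a _ => hdeg a), Finset.sum_const, smul_eq_mul]
      · intro a ha b hb hab
        simp only [Finset.disjoint_left, mem_filter]
        rintro e ⟨heE, hae⟩ ⟨-, hbe⟩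
        exact two_mem a b e heE hab hae hbe
          (by rw [(hs a).mp ha, (hs b).mp hb])
    have hAB : A.card = B.card := by
      have h1 := hsidecard A true (by intro x; simp [hA])
      have h2 := hsidecard B false (by intro x; simp [hB])
      exact Nat.eq_of_mul_eq_mul_right (Nat.succ_pos k) (h1 ▸ h2)
    -- g is surjective onto B
    have hgsurj : ∀ v ∈ B, ∃ a : ↥A, g a = v := by
      have himg : (Finset.univ.image g) = B := by
        apply Finset.eq_of_subset_of_card_le
        · intro v hv
          obtain ⟨a, -, rfl⟩ := Finset.mem_image.mp hv
          simp [hB, hgside a]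
        · rw [Finset.card_image_of_injective _ hginj, Finset.card_univ,
            Fintype.card_coe, hAB]
      intro v hv
      rw [← himg] at hv
      obtain ⟨a, -, ha⟩ := Finset.mem_image.mp hv
      exact ⟨a, ha⟩
    -- the matching
    set M : Finset (Sym2 V) := Finset.univ.image (fun a : ↥A => s(a.1, g a)) with hM
    have hMsub : M ⊆ E := by
      intro e he
      obtain ⟨a, -, rfl⟩ := Finset.mem_image.mp he
      exact hgE a
    have hcover : ∀ v : V, ∃ e ∈ M, v ∈ e := by
      intro v
      rcases Bool.eq_false_or_eq_true (side v) with h1 | h1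
      · refine ⟨s(v, g ⟨v, Finset.mem_filter.mpr ⟨Finset.mem_univ v, h1⟩⟩),
          Finset.mem_image.mpr
            ⟨⟨v, Finset.mem_filter.mpr ⟨Finset.mem_univ v, h1⟩⟩, Finset.mem_univ _, rfl⟩,
          Sym2.mem_mk_left _ _⟩
      · obtain ⟨a, ha⟩ := hgsurj v (Finset.mem_filter.mpr ⟨Finset.mem_univ v, h1⟩)
        exact ⟨s(a.1, g a), Finset.mem_image.mpr ⟨a, Finset.mem_univ _, rfl⟩,
          ha ▸ Sym2.mem_mk_right _ _⟩
    have huniq : ∀ (v : V) (e₁ e₂ : Sym2 V), e₁ ∈ M → e₂ ∈ M → v ∈ e₁ → v ∈ e₂ →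
        e₁ = e₂ := by
      intro v e₁ e₂ h₁ h₂ hv₁ hv₂
      obtain ⟨a₁, -, rfl⟩ := Finset.mem_image.mp h₁
      obtain ⟨a₂, -, rfl⟩ := Finset.mem_image.mp h₂
      rcases Sym2.mem_iff.mp hv₁ with h1 | h1 <;> rcases Sym2.mem_iff.mp hv₂ with h2 | h2
      · have : a₁ = a₂ := Subtype.ext (h1.symm.trans h2)
        rw [this]
      · exfalso
        have := hAside a₁
        rw [← h1, h2, hgside a₂] at this
        exact Bool.false_ne_true this
      · exfalso
        have := hAside a₂
        rw [← h2, h1, hgside a₁] at this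
        exact Bool.false_ne_true this
      · have : a₁ = a₂ := hginj (h1.symm.trans h2)
        rw [this]
    -- remove the matching and recurse
    set E' : Finset (Sym2 V) := E \ M with hE'
    have hbip' : ∀ a b : V, s(a, b) ∈ E' → side a ≠ side b := by
      intro a b h
      exact hbip a b (Finset.sdiff_subset h)
    have hdeg'' : ∀ v : V, (E'.filter (fun e => v ∈ e)).card = k := by
      intro v
      obtain ⟨e₀, he₀M, he₀v⟩ := hcover v
      have hfM : M.filter (fun e => v ∈ e) = {e₀} := by
        ext e
        simp only [mem_filter, Finset.mem_singleton]
        constructor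
        · rintro ⟨heM, hev⟩
          exact huniq v e e₀ heM he₀M hev he₀v
        · rintro rfl
          exact ⟨he₀M, he₀v⟩
      have hsplit : E'.filter (fun e => v ∈ e)
          = (E.filter (fun e => v ∈ e)) \ (M.filter (fun e => v ∈ e)) := by
        ext e
        simp only [hE', mem_filter, Finset.mem_sdiff]
        tauto
      rw [hsplit, hfM, Finset.card_sdiff_of_subset]
      · rw [hdeg v]; simp
      · intro e he
        rw [Finset.mem_singleton] at he
        subst he
        exact mem_filter.mpr ⟨hMsub he₀M, he₀v⟩
    obtain ⟨f', hf'⟩ := ih E' side hbip' hdeg''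
    refine ⟨fun e => if h : e.1 ∈ M then Fin.last k
      else Fin.castSucc (f' ⟨e.1, Finset.mem_sdiff.mpr ⟨e.2, h⟩⟩), ?_⟩
    rintro e₁ e₂ hne ⟨v, hv₁, hv₂⟩
    dsimp only
    by_cases h₁ : e₁.1 ∈ M <;> by_cases h₂ : e₂.1 ∈ M
    · exact absurd (Subtype.ext (huniq v e₁.1 e₂.1 h₁ h₂ hv₁ hv₂)) hne
    · rw [dif_pos h₁, dif_neg h₂]
      exact (Fin.castSucc_lt_last _).ne'
    · rw [dif_neg h₁, dif_pos h₂]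
      exact (Fin.castSucc_lt_last _).ne
    · rw [dif_neg h₁, dif_neg h₂]
      have hvne : e₁.1 ≠ e₂.1 := fun h => hne (Subtype.ext h)
      have hne' := hf' ⟨e₁.1, Finset.mem_sdiff.mpr ⟨e₁.2, h₁⟩⟩
        ⟨e₂.1, Finset.mem_sdiff.mpr ⟨e₂.2, h₂⟩⟩
        (fun h => hvne (by injection h)) ⟨v, hv₁, hv₂⟩
      exact fun h => hne' (Fin.castSucc_inj.mp h)

end Konig

/-- König's edge-coloring theorem: every finite bipartite `k`-regular
graph with `k > 0` admits a proper edge-coloring with exactly `k` colors. -/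
theorem bipartite_regular_proper_edge_coloring {V : Type} [Fintype V] [DecidableEq V]
    (G : SimpleGraph V) [DecidableRel G.Adj] (k : ℕ) (hk : 0 < k)
    (hbip : G.Colorable 2) (hreg : G.IsRegularOfDegree k) :
    ∃ f : G.edgeSet → Fin k, ∀ e₁ e₂ : G.edgeSet, e₁ ≠ e₂ →
      (∃ v : V, v ∈ (e₁ : Sym2 V) ∧ v ∈ (e₂ : Sym2 V)) → f e₁ ≠ f e₂ := by
  obtain ⟨c⟩ := hbip
  set side : V → Bool := fun v => decide (c v = 0) with hside
  have hb : ∀ a b : V, s(a, b) ∈ G.edgeFinset → side a ≠ side b := by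
    intro a b h
    rw [SimpleGraph.mem_edgeFinset, SimpleGraph.mem_edgeSet] at h
    have hcc : c a ≠ c b := c.valid h
    have key : ∀ x y : Fin 2, x ≠ y → decide (x = 0) ≠ decide (y = 0) := by decide
    exact key _ _ hcc
  have hd : ∀ v : V, (G.edgeFinset.filter (fun e => v ∈ e)).card = k := by
    intro v
    rw [← SimpleGraph.incidenceFinset_eq_filter, SimpleGraph.card_incidenceFinset_eq_degree,
      hreg v]
  obtain ⟨f, hf⟩ := konig_key k G.edgeFinset side hb hd
  refine ⟨fun e => f ⟨e.1, SimpleGraph.mem_edgeFinset.mpr e.2⟩, ?_⟩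
  intro e₁ e₂ hne hshare
  refine hf _ _ (fun h => hne (Subtype.ext (by injection h))) hshare
end

section
/- An (n+1)-colored graph of order 4 that is not bipartite contains a 3-residue isomorphic to the complete graph K4 on four vertices. -/
section Card
variable {V : Type} [Fintype V]

lemma eq_of_card_four' (h4 : Fintype.card V = 4) {a b c x y : V}
    (hab : a ≠ b) (hac : a ≠ c) (hbc : b ≠ c)
    (hxa : x ≠ a) (hxb : x ≠ b) (hxc : x ≠ c)
    (hya : y ≠ a) (hyb : y ≠ b) (hyc : y ≠ c) : x = y := by
  classical
  by_contra hxy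
  have hle : ({x, y, a, b, c} : Finset V).card ≤ 4 := h4 ▸ Finset.card_le_univ _
  have h5 : ({x, y, a, b, c} : Finset V).card = 5 := by
    rw [Finset.card_insert_of_notMem (by simp [hxy, hxa, hxb, hxc]),
        Finset.card_insert_of_notMem (by simp [hya, hyb, hyc]),
        Finset.card_insert_of_notMem (by simp [hab, hac]),
        Finset.card_insert_of_notMem (by simp [hbc]),
        Finset.card_singleton]
  omega

lemma exists_fourth' (h4 : Fintype.card V = 4) (a b c : V) :
    ∃ u : V, u ≠ a ∧ u ≠ b ∧ u ≠ c := by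
  classical
  by_contra h
  push_neg at h
  have hsub : (Finset.univ : Finset V) ⊆ {a, b, c} := by
    intro u _
    simp only [Finset.mem_insert, Finset.mem_singleton]
    by_cases h1 : u = a
    · exact Or.inl h1
    by_cases h2 : u = b
    · exact Or.inr (Or.inl h2)
    exact Or.inr (Or.inr (h u h1 h2))
  have := Finset.card_le_card hsub
  have h3 : ({a, b, c} : Finset V).card ≤ 3 :=
    le_trans (Finset.card_insert_le _ _)
      (by have := Finset.card_insert_le b ({c} : Finset V); simp at this ⊢; omega)
  simp [h4] at this
  omega
end Card



/-- An `n`-colored graph: a finite connected `n`-regular multigraph without loops,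
equipped with a proper edge-coloring by the `n` colors `Fin n`. -/
structure ColoredGraph (n : ℕ) where
  V : Type
  E : Type
  [fintypeV : Fintype V]
  [fintypeE : Fintype E]
  ends : E → Sym2 V
  no_loops : ∀ e : E, ¬ (ends e).IsDiag
  color : E → Fin n
  proper : ∀ e₁ e₂ : E, e₁ ≠ e₂ → color e₁ = color e₂ →
      ∀ v : V, ¬ (v ∈ ends e₁ ∧ v ∈ ends e₂)
  regular : ∀ v : V, Set.ncard {e : E | v ∈ ends e} = n
  connected : ∀ v w : V,
      Relation.ReflTransGen (fun a b => ∃ e : E, a ∈ ends e ∧ b ∈ ends e) v w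

attribute [instance] ColoredGraph.fintypeV ColoredGraph.fintypeE

namespace ColoredGraph

variable {n : ℕ} (G : ColoredGraph n)

/-- Reachability using only edges whose color lies in `Δ`. -/
def Reach (Δ : Set (Fin n)) (v w : G.V) : Prop :=
  Relation.EqvGen (fun a b => ∃ e : G.E, G.color e ∈ Δ ∧ a ∈ G.ends e ∧ b ∈ G.ends e) v w

/-- The `Δ`-residue containing `v`. -/
def residue (Δ : Set (Fin n)) (v : G.V) : Set G.V := {u | G.Reach Δ v u}

def residueSetoid (Δ : Set (Fin n)) : Setoid G.V :=
  ⟨G.Reach Δ, Relation.EqvGen.is_equivalence _⟩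

/-- number of `Δ`-residues, i.e. connected components of the spanning subgraph `Γ_Δ`. -/
noncomputable def numResidues (Δ : Set (Fin n)) : ℕ :=
  Nat.card (Quotient (G.residueSetoid Δ))

end ColoredGraph

namespace ColoredGraph

def Bipartite {n : ℕ} (G : ColoredGraph n) : Prop :=
  ∃ f : G.V → Bool, ∀ e : G.E, ∀ v ∈ G.ends e, ∀ w ∈ G.ends e, v ≠ w → f v ≠ f w

end ColoredGraph


namespace ColoredGraph

variable {n : ℕ} (G : ColoredGraph (n + 1))

lemma existsUnique_edge (v : G.V) (c : Fin (n + 1)) :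
    ∃! e : G.E, v ∈ G.ends e ∧ G.color e = c := by
  classical
  have hinj : Function.Injective
      (fun e : {e : G.E // v ∈ G.ends e} => G.color e.1) := by
    intro e₁ e₂ h
    by_contra hne
    exact G.proper e₁.1 e₂.1 (fun h' => hne (Subtype.ext h')) h v ⟨e₁.2, e₂.2⟩
  have hFin : Fintype.card {e : G.E // v ∈ G.ends e} = n + 1 := by
    rw [← Nat.card_eq_fintype_card]
    have := G.regular v
    rwa [← Nat.card_coe_set_eq] at this
  have hbij : Function.Bijective
      (fun e : {e : G.E // v ∈ G.ends e} => G.color e.1) := by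
    rw [Fintype.bijective_iff_injective_and_card]
    exact ⟨hinj, by simp [hFin]⟩
  obtain ⟨⟨e, he⟩, hec⟩ := hbij.2 c
  refine ⟨e, ⟨he, hec⟩, ?_⟩
  rintro e' ⟨he', hec'⟩
  have : (⟨e', he'⟩ : {e : G.E // v ∈ G.ends e}) = ⟨e, he⟩ :=
    hinj (by simp only [hec, hec'])
  exact congrArg Subtype.val this

noncomputable def theEdge (v : G.V) (c : Fin (n + 1)) : G.E :=
  (G.existsUnique_edge v c).choose

lemma theEdge_mem (v : G.V) (c : Fin (n + 1)) : v ∈ G.ends (G.theEdge v c) :=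
  (G.existsUnique_edge v c).choose_spec.1.1

lemma theEdge_color (v : G.V) (c : Fin (n + 1)) : G.color (G.theEdge v c) = c :=
  (G.existsUnique_edge v c).choose_spec.1.2

lemma theEdge_unique {v : G.V} {c : Fin (n + 1)} {e : G.E}
    (h1 : v ∈ G.ends e) (h2 : G.color e = c) : e = G.theEdge v c :=
  (G.existsUnique_edge v c).choose_spec.2 e ⟨h1, h2⟩

noncomputable def partner (c : Fin (n + 1)) (v : G.V) : G.V :=
  Sym2.Mem.other (G.theEdge_mem v c)

lemma ends_theEdge (v : G.V) (c : Fin (n + 1)) :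
    G.ends (G.theEdge v c) = s(v, G.partner c v) :=
  (Sym2.other_spec (G.theEdge_mem v c)).symm

lemma partner_ne (c : Fin (n + 1)) (v : G.V) : G.partner c v ≠ v :=
  Sym2.other_ne (G.no_loops _) (G.theEdge_mem v c)

lemma partner_eq_of_ends {c : Fin (n + 1)} {e : G.E} {v w : G.V}
    (hc : G.color e = c) (he : G.ends e = s(v, w)) : G.partner c v = w := by
  have hv : v ∈ G.ends e := by rw [he]; exact Sym2.mem_mk_left _ _
  have := G.theEdge_unique hv hc
  have h2 : s(v, G.partner c v) = s(v, w) := by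
    rw [← G.ends_theEdge, ← this, he]
  rcases Sym2.eq_iff.mp h2 with ⟨_, h⟩ | ⟨h1, h2'⟩
  · exact h
  · rw [h2', h1]

lemma partner_partner (c : Fin (n + 1)) (v : G.V) :
    G.partner c (G.partner c v) = v :=
  G.partner_eq_of_ends (G.theEdge_color v c)
    (by rw [G.ends_theEdge v c, Sym2.eq_swap])

end ColoredGraph


namespace ColoredGraph
variable {n : ℕ} (G : ColoredGraph (n + 1))

/-- Two color matchings agreeing at one vertex agree everywhere (order 4). -/
lemma partner_eq_all (h4 : Fintype.card G.V = 4) {c c' : Fin (n + 1)} {v : G.V}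
    (h : G.partner c v = G.partner c' v) (a : G.V) :
    G.partner c a = G.partner c' a := by
  by_cases hav : a = v
  · rw [hav, h]
  by_cases hpa : G.partner c v = a
  · have hpa' : G.partner c' v = a := h ▸ hpa
    have h1 : G.partner c a = v := by rw [← hpa, G.partner_partner]
    have h2 : G.partner c' a = v := by rw [← hpa', G.partner_partner]
    rw [h1, h2]
  · set w := G.partner c v with hw
    have hw' : G.partner c' v = w := h.symm
    have hwv : w ≠ v := G.partner_ne c v
    have hwa : w ≠ a := hpa
    have key : ∀ d : Fin (n + 1), G.partner d v = w →
        G.partner d a ≠ a ∧ G.partner d a ≠ v ∧ G.partner d a ≠ w := by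
      intro d hd
      refine ⟨G.partner_ne d a, ?_, ?_⟩
      · intro hv
        have : G.partner d v = a := by rw [← hv, G.partner_partner]
        rw [hd] at this; exact hwa this
      · intro hww
        have : G.partner d w = a := by rw [← hww, G.partner_partner]
        have h2 : G.partner d w = v := by rw [← hd, G.partner_partner]
        rw [this] at h2; exact hav h2
    obtain ⟨p1, p2, p3⟩ := key c hw.symm
    obtain ⟨q1, q2, q3⟩ := key c' hw'
    exact eq_of_card_four' h4 hav (fun hh => hwa hh.symm) (fun hh => hwv hh.symm)
      p1 p2 p3 q1 q2 q3

/-- If some vertex `w ≠ a` is never the partner of `a`, the graph is bipartite. -/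
lemma bipartite_of_missing (h4 : Fintype.card G.V = 4) {a w : G.V} (hwa : w ≠ a)
    (hmiss : ∀ c : Fin (n + 1), G.partner c a ≠ w) : G.Bipartite := by
  classical
  refine ⟨fun v => decide (v = a ∨ v = w), ?_⟩
  intro e x hx y hy hxy
  have hends : G.ends e = s(x, y) :=
    Sym2.eq_of_ne_mem hxy hx hy (Sym2.mem_mk_left x y) (Sym2.mem_mk_right x y)
  have hyx : G.partner (G.color e) x = y := G.partner_eq_of_ends rfl hends
  set c := G.color e with hc
  have hmiss' : G.partner c a ≠ w := hmiss c
  have hpaa : G.partner c a ≠ a := G.partner_ne c a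
  have claim : (x = a ∨ x = w) ↔ ¬(y = a ∨ y = w) := by
    constructor
    · rintro (rfl | rfl)
      · rintro (h' | h')
        · exact G.partner_ne c x (hyx.trans h')
        · exact hmiss' (hyx.trans h')
      · rintro (h' | h')
        · have : G.partner c y = x := by rw [← hyx, G.partner_partner]
          rw [h'] at this
          exact hmiss' this
        · exact G.partner_ne c x (hyx.trans h')
    · intro hny
      push_neg at hny
      obtain ⟨hya, hyw⟩ := hny
      by_contra hnx
      push_neg at hnx
      obtain ⟨hxa, hxw⟩ := hnx
      -- partner c a avoids a, x, y; so does w; contradiction with hmiss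
      have hxy' : x ≠ y := hxy
      have p2 : G.partner c a ≠ x := by
        intro hh
        have : G.partner c x = a := by rw [← hh, G.partner_partner]
        rw [hyx] at this; exact hya this
      have p3 : G.partner c a ≠ y := by
        intro hh
        have : G.partner c y = a := by rw [← hh, G.partner_partner]
        have h2 : G.partner c y = x := by rw [← hyx, G.partner_partner]
        rw [this] at h2; exact hxa h2.symm
      have := eq_of_card_four' h4 (Ne.symm hxa) (Ne.symm hya) hxy'
        hpaa p2 p3 hwa (fun hh => hxw hh.symm) (fun hh => hyw hh.symm)
      exact hmiss' this
  intro hEq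
  rw [decide_eq_decide] at hEq
  tauto

end ColoredGraph

/-- an (n+1)-colored graph of order 4 which is not bipartite contains
a 3-residue isomorphic to the complete graph K₄: there are three colors Δ such that
any two distinct vertices are joined by exactly one Δ-colored edge. -/
theorem nonbipartite_order_four_contains_K4 (n : ℕ) (G : ColoredGraph (n + 1))
    (h4 : Fintype.card G.V = 4) (hnb : ¬ G.Bipartite) :
    ∃ Δ : Finset (Fin (n + 1)), Δ.card = 3 ∧
      ∀ v w : G.V, v ≠ w → ∃! e : G.E, G.color e ∈ Δ ∧ G.ends e = s(v, w) := by
  classical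
  obtain ⟨a⟩ : Nonempty G.V := Fintype.card_pos_iff.mp (by omega)
  have hall : ∀ w : G.V, ∃ c : Fin (n + 1), w ≠ a → G.partner c a = w := by
    intro w
    by_cases hw : w = a
    · exact ⟨0, fun h => absurd hw h⟩
    · by_contra h
      push_neg at h
      exact hnb (G.bipartite_of_missing h4 hw fun c => (h c).2)
  choose F hF using hall
  set Δ : Finset (Fin (n + 1)) := (Finset.univ.erase a).image F with hΔ
  have hmemΔ : ∀ {c : Fin (n + 1)}, c ∈ Δ ↔ ∃ x : G.V, x ≠ a ∧ F x = c := by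
    intro c
    simp [hΔ, Finset.mem_image, Finset.mem_erase]
  have hcard : Δ.card = 3 := by
    rw [hΔ, Finset.card_image_of_injOn, Finset.card_erase_of_mem (Finset.mem_univ a),
      Finset.card_univ, h4]
    intro x hx y hy hxy
    simp only [Finset.mem_coe, Finset.mem_erase] at hx hy
    rw [← hF x hx.1, ← hF y hy.1, hxy]
  refine ⟨Δ, hcard, ?_⟩
  intro v w hvw
  -- find the color
  have hex : ∃ x : G.V, x ≠ a ∧ G.partner (F x) v = w := by
    by_cases hv : v = a
    · subst hv
      have hwv : w ≠ v := Ne.symm hvw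
      exact ⟨w, hwv, hF w hwv⟩
    · by_cases hw : w = a
      · refine ⟨v, hv, ?_⟩
        have h1 := hF v hv
        have h2 : G.partner (F v) (G.partner (F v) a) = a := G.partner_partner _ _
        rw [h1] at h2
        rw [hw]
        exact h2
      · obtain ⟨u, hua, huv, huw⟩ := exists_fourth' h4 a v w
        refine ⟨u, hua, ?_⟩
        have hpu : G.partner (F u) a = u := hF u hua
        have p1 : G.partner (F u) v ≠ v := G.partner_ne _ v
        have p2 : G.partner (F u) v ≠ a := by
          intro hh
          have : G.partner (F u) a = v := by rw [← hh, G.partner_partner]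
          rw [hpu] at this; exact huv this
        have p3 : G.partner (F u) v ≠ u := by
          intro hh
          have h2 : G.partner (F u) (G.partner (F u) v) = v := G.partner_partner _ _
          rw [hh] at h2
          have h3 : G.partner (F u) (G.partner (F u) a) = a := G.partner_partner _ _
          rw [hpu] at h3
          exact hv (h2.symm.trans h3)
        exact eq_of_card_four' h4 hv (fun hh => huv hh.symm) (Ne.symm hua)
          p1 p2 p3 (Ne.symm hvw) hw (Ne.symm huw)
  obtain ⟨x, hxa, hxp⟩ := hex
  refine ⟨G.theEdge v (F x), ⟨?_, ?_⟩, ?_⟩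
  · exact hmemΔ.mpr ⟨x, hxa, (G.theEdge_color v (F x)).symm⟩
  · rw [G.ends_theEdge, hxp]
  · rintro e' ⟨hcΔ, hends'⟩
    obtain ⟨y, hya, hyc⟩ := hmemΔ.mp hcΔ
    have hyp : G.partner (F y) v = w := G.partner_eq_of_ends hyc.symm hends'
    have heq : G.partner (F y) a = G.partner (F x) a :=
      G.partner_eq_all h4 (hyp.trans hxp.symm) a
    rw [hF y hya, hF x hxa] at heq
    have hv' : v ∈ G.ends e' := by rw [hends']; exact Sym2.mem_mk_left v w
    have hc' : G.color e' = F x := by rw [← hyc, heq]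
    exact G.theEdge_unique hv' hc'
end

section
/- Let Γ be a 5-colored graph of order 2p. Define the subdegree ρ_G(Γ) = |ℛ_4(Γ)| + 5p − |ℛ_2(Γ)|, where ℛ_4(Γ) is the set of 4-residues and ℛ_2(Γ) is the set of bigons. Then the sum over the five colors c of the total G-degrees of the connected components of Γ restricted to the other four colors equals 3ρ_G(Γ). -/
namespace ColoredGraph

variable (G : ColoredGraph 5)

/-- the set of Δ-residues (connected components of Γ_Δ), as sets of vertices. -/
def componentsOf (Δ : Set (Fin 5)) : Set (Set G.V) :=
  {C | ∃ v : G.V, C = G.residue Δ v}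

/-- number of {i,j}-bigons contained in the vertex set `C`. -/
noncomputable def gIn (i j : Fin 5) (C : Set G.V) : ℕ :=
  {C' : Set G.V | ∃ w ∈ C, C' = G.residue {i, j} w}.ncard

/-- Euler characteristic of the regular embedding surface of the 4-colored
component `C` of `Γ_ĉ` with respect to the cyclic permutation ε of its four
colors: Σ_j g_{ε_j,ε_{j+1}}(C) − 2q, where 2q = |C|. -/
noncomputable def chiEps (ε : ZMod 4 → Fin 5) (C : Set G.V) : ℚ :=
  (∑ j : ZMod 4, (G.gIn (ε j) (ε (j + 1)) C : ℚ)) - (C.ncard : ℚ)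

/-- cyclic orderings of the four colors different from `c`; each of the three
cyclic permutations up to inversion is represented by 8 such maps. -/
def CyclAvoiding (c : Fin 5) : Type :=
  {ε : ZMod 4 → Fin 5 // Function.Injective ε ∧ ∀ j, ε j ≠ c}

/-- sum of the G-degrees of the connected components of `Γ_ĉ`:
for each component, the sum over the 3 cyclic permutations ε (up to inversion) of
the genus ρ_ε given by 2 − 2ρ_ε = χ_ε. -/
noncomputable def omegaGhat (c : Fin 5) : ℚ :=
  ∑ᶠ C ∈ G.componentsOf {x | x ≠ c},
    (1 / 8) * ∑ᶠ ε : CyclAvoiding c, (2 - G.chiEps ε.val C) / 2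

/-- the subdegree ρ_G(Γ) = |ℛ₄(Γ)| + 5p − |ℛ₂(Γ)|. -/
noncomputable def subdegree (p : ℕ) : ℤ :=
  (∑ c : Fin 5, (G.numResidues {x | x ≠ c} : ℤ)) + 5 * (p : ℤ)
    - (∑ Δ ∈ Finset.univ.filter (fun Δ : Finset (Fin 5) => Δ.card = 2),
        (G.numResidues ↑Δ : ℤ))

end ColoredGraph

/-!
Fix a color `c` and a component `C` of `Γ_ĉ`. Among the 24 injective cyclic orderings `ε` of the
four colors other than `c`, every ordered pair of distinct such colors occurs 8 times as a pair of
consecutive colors, so the G-degree of `C` is `3 + 3|C|/2 - Σ g_{ij}(C)`, the sum running over the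
pairs `{i, j}` avoiding `c`. The `{i, j}`-bigons of `Γ` are partitioned among the components of
`Γ_ĉ`, hence `ω_G(Γ_ĉ) = 3 #components(Γ_ĉ) + 3p - Σ g_{ij}(Γ)`. Summing over `c`, each pair
`{i, j}` is avoided by exactly three colors.
-/

open Finset

section OffDiag

variable {α M : Type*} [DecidableEq α] [AddCommMonoid M]

theorem Finset.sum_offDiag_pair (s : Finset α) (f : Finset α → M) :
    ∑ q ∈ s.offDiag, f {q.1, q.2} = 2 • ∑ t ∈ s.powersetCard 2, f t := by
  have hmaps : ∀ q ∈ s.offDiag, ({q.1, q.2} : Finset α) ∈ s.powersetCard 2 := by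
    intro q hq
    obtain ⟨h1, h2, hne⟩ := mem_offDiag.1 hq
    exact mem_powersetCard.2 ⟨insert_subset h1 (singleton_subset_iff.2 h2), card_pair hne⟩
  have hfiber :
      ∀ t ∈ s.powersetCard 2, #{q ∈ s.offDiag | ({q.1, q.2} : Finset α) = t} = 2 := by
    intro t ht
    obtain ⟨hts, htc⟩ := mem_powersetCard.1 ht
    obtain ⟨a, b, hab, rfl⟩ := card_eq_two.1 htc
    have ha : a ∈ s := hts (mem_insert_self a _)
    have hb : b ∈ s := hts (mem_insert_of_mem (mem_singleton_self b))
    rw [show {q ∈ s.offDiag | ({q.1, q.2} : Finset α) = {a, b}} = {(a, b), (b, a)} by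
      ext ⟨x, y⟩
      simp only [mem_filter, mem_offDiag, mem_insert, mem_singleton, Prod.mk.injEq,
        ← coe_inj, coe_pair, Set.pair_eq_pair_iff]
      aesop]
    exact card_pair (by simp [hab])
  rw [← sum_fiberwise_of_maps_to hmaps, smul_sum]
  refine sum_congr rfl fun t ht => ?_
  rw [sum_congr rfl fun q hq => congrArg f (mem_filter.1 hq).2, sum_const, hfiber t ht]

theorem Finset.sum_univ_sum_offDiag_erase [Fintype α] (F : α × α → M) :
    ∑ c, ∑ q ∈ (univ.erase c).offDiag, F q
      = (Fintype.card α - 2) • ∑ q ∈ univ.offDiag, F q := by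
  rw [sum_comm' (t' := univ.offDiag) (s' := fun q => ({q.1, q.2} : Finset α)ᶜ)]
  · rw [smul_sum]
    refine sum_congr rfl fun q hq => ?_
    rw [sum_const, card_compl, card_pair (mem_offDiag.1 hq).2.2]
  · intro c q
    simp only [mem_univ, mem_offDiag, mem_erase, mem_compl, mem_insert, mem_singleton]
    tauto

end OffDiag

namespace ColoredGraph

section Residues

variable {n : ℕ} (G : ColoredGraph n)

theorem reach_mono {Δ Δ' : Set (Fin n)} (h : Δ ⊆ Δ') {v w : G.V} (hvw : G.Reach Δ v w) :
    G.Reach Δ' v w :=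
  Relation.EqvGen.mono (fun _ _ ⟨e, he, hv, hw⟩ => ⟨e, h he, hv, hw⟩) _ _ hvw

noncomputable instance (Δ : Set (Fin n)) : Fintype (Quotient (G.residueSetoid Δ)) :=
  Fintype.ofFinite _

noncomputable instance (Δ : Set (Fin n)) : DecidableEq (Quotient (G.residueSetoid Δ)) :=
  Classical.decEq _

theorem numResidues_eq_card (Δ : Set (Fin n)) :
    G.numResidues Δ = Fintype.card (Quotient (G.residueSetoid Δ)) :=
  Nat.card_eq_fintype_card

def residueOf (Δ : Set (Fin n)) (x : Quotient (G.residueSetoid Δ)) : Set G.V :=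
  {u | ⟦u⟧ = x}

theorem residueOf_mk (Δ : Set (Fin n)) (v : G.V) : G.residueOf Δ ⟦v⟧ = G.residue Δ v := by
  ext u
  exact Quotient.eq.trans (Setoid.comm' _)

theorem residueOf_injective (Δ : Set (Fin n)) : Function.Injective (G.residueOf Δ) := by
  intro x y hxy
  obtain ⟨v, rfl⟩ := Quotient.exists_rep x
  exact (hxy ▸ rfl : v ∈ G.residueOf Δ y)

theorem sum_ncard_residueOf (Δ : Set (Fin n)) :
    ∑ x, (G.residueOf Δ x).ncard = Fintype.card G.V := by
  classical
  simp only [residueOf, Set.ncard_eq_toFinset_card', Set.toFinset_ofPred]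
  exact (card_eq_sum_card_fiberwise fun _ _ => mem_univ _).symm

def residueMap {Δ Δ' : Set (Fin n)} (h : Δ ⊆ Δ') :
    Quotient (G.residueSetoid Δ) → Quotient (G.residueSetoid Δ') :=
  Quotient.map id fun _ _ => G.reach_mono h

end Residues

variable (G : ColoredGraph 5)

theorem componentsOf_eq_range (Δ : Set (Fin 5)) :
    G.componentsOf Δ = Set.range (G.residueOf Δ) := by
  ext C
  constructor
  · rintro ⟨v, rfl⟩
    exact ⟨⟦v⟧, G.residueOf_mk Δ v⟩
  · rintro ⟨x, rfl⟩
    obtain ⟨v, rfl⟩ := Quotient.exists_rep x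
    exact ⟨v, G.residueOf_mk Δ v⟩

theorem finsum_mem_componentsOf {M : Type*} [AddCommMonoid M] (Δ : Set (Fin 5))
    (F : Set G.V → M) : ∑ᶠ C ∈ G.componentsOf Δ, F C = ∑ x, F (G.residueOf Δ x) := by
  rw [componentsOf_eq_range, finsum_mem_range (G.residueOf_injective Δ),
    finsum_eq_sum_of_fintype]

theorem gIn_residueOf {i j : Fin 5} {Δ : Set (Fin 5)} (h : {i, j} ⊆ Δ)
    (x : Quotient (G.residueSetoid Δ)) :
    G.gIn i j (G.residueOf Δ x) = #{y | G.residueMap h y = x} := by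
  have hbigons : {C | ∃ w ∈ G.residueOf Δ x, C = G.residue {i, j} w}
      = G.residueOf {i, j} '' {y | G.residueMap h y = x} := by
    ext C
    constructor
    · rintro ⟨w, hw, rfl⟩
      exact ⟨⟦w⟧, hw, G.residueOf_mk _ w⟩
    · rintro ⟨y, hy, rfl⟩
      obtain ⟨w, rfl⟩ := Quotient.exists_rep y
      exact ⟨w, hy, G.residueOf_mk _ w⟩
  rw [gIn, hbigons, Set.ncard_image_of_injective _ (G.residueOf_injective _),
    Set.ncard_eq_toFinset_card', Set.toFinset_ofPred]

theorem sum_gIn_residueOf {i j : Fin 5} {Δ : Set (Fin 5)} (h : {i, j} ⊆ Δ) :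
    ∑ x, G.gIn i j (G.residueOf Δ x) = G.numResidues {i, j} := by
  simp only [G.gIn_residueOf h, numResidues_eq_card]
  exact (card_eq_sum_card_fiberwise (f := G.residueMap h) fun _ _ => mem_univ _).symm

instance (c : Fin 5) : Fintype (CyclAvoiding c) := by
  unfold CyclAvoiding
  infer_instance

set_option maxHeartbeats 1000000 in
theorem card_cyclAvoiding (c : Fin 5) : Fintype.card (CyclAvoiding c) = 24 := by
  fin_cases c <;> decide

set_option maxHeartbeats 4000000 in
theorem card_cyclAvoiding_consecutive_eq (c : Fin 5) (q : Fin 5 × Fin 5) :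
    #{x : CyclAvoiding c × ZMod 4 | (x.1.val x.2, x.1.val (x.2 + 1)) = q}
      = if q ∈ (univ.erase c).offDiag then 8 else 0 := by
  obtain ⟨a, b⟩ := q
  fin_cases c <;> fin_cases a <;> fin_cases b <;> decide

theorem sum_cyclAvoiding_consecutive {M : Type*} [AddCommMonoid M] (c : Fin 5)
    (g : Fin 5 × Fin 5 → M) :
    ∑ ε : CyclAvoiding c, ∑ j, g (ε.val j, ε.val (j + 1))
      = 8 • ∑ q ∈ (univ.erase c).offDiag, g q := by
  rw [← Fintype.sum_prod_type', ← sum_fiberwise univ fun x => (x.1.val x.2, x.1.val (x.2 + 1))]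
  simp_rw [sum_congr rfl fun x hx => congrArg g (mem_filter.1 hx).2, sum_const,
    card_cyclAvoiding_consecutive_eq, ite_smul, zero_smul, sum_ite_mem, univ_inter, smul_sum]

noncomputable def gDegree (c : Fin 5) (C : Set G.V) : ℚ :=
  1 / 8 * ∑ᶠ ε : CyclAvoiding c, (2 - G.chiEps ε.val C) / 2

theorem gDegree_eq (c : Fin 5) (C : Set G.V) :
    G.gDegree c C = 3 + 3 / 2 * C.ncard
      - 1 / 2 * ∑ q ∈ (univ.erase c).offDiag, (G.gIn q.1 q.2 C : ℚ) := by
  have hterm : ∀ ε : CyclAvoiding c, (2 - G.chiEps ε.val C) / 2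
      = (2 + C.ncard) / 2 - 1 / 2 * ∑ j, (G.gIn (ε.val j) (ε.val (j + 1)) C : ℚ) := by
    intro ε
    rw [chiEps]
    ring
  rw [gDegree, finsum_eq_sum_of_fintype, sum_congr rfl fun ε _ => hterm ε, sum_sub_distrib,
    ← mul_sum, sum_cyclAvoiding_consecutive c fun q => (G.gIn q.1 q.2 C : ℚ), sum_const,
    card_univ, card_cyclAvoiding, nsmul_eq_mul, nsmul_eq_mul]
  ring

theorem omegaGhat_eq (c : Fin 5) :
    G.omegaGhat c = 3 * G.numResidues {x | x ≠ c} + 3 / 2 * Fintype.card G.V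
      - 1 / 2 * ∑ q ∈ (univ.erase c).offDiag, (G.numResidues {q.1, q.2} : ℚ) := by
  have hbigons : ∀ q ∈ (univ.erase c).offDiag,
      ∑ x, (G.gIn q.1 q.2 (G.residueOf {x | x ≠ c} x) : ℚ) = G.numResidues {q.1, q.2} := by
    intro q hq
    obtain ⟨h1, h2, -⟩ := mem_offDiag.1 hq
    have hsub : {q.1, q.2} ⊆ {x | x ≠ c} := by
      simpa [Set.insert_subset_iff] using And.intro (ne_of_mem_erase h1) (ne_of_mem_erase h2)
    exact_mod_cast G.sum_gIn_residueOf hsub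
  change ∑ᶠ C ∈ G.componentsOf {x | x ≠ c}, G.gDegree c C = _
  rw [finsum_mem_componentsOf]
  simp only [gDegree_eq, sum_sub_distrib, sum_add_distrib, ← mul_sum, sum_const, card_univ]
  rw [sum_comm, sum_congr rfl hbigons, ← Nat.cast_sum, sum_ncard_residueOf, numResidues_eq_card,
    nsmul_eq_mul]
  ring

end ColoredGraph

/-- for a 5-colored graph Γ of order 2p,
Σ_c ω_G(Γ_ĉ) = 3·ρ_G(Γ), where ρ_G(Γ) = |ℛ₄(Γ)| + 5p − |ℛ₂(Γ)|. -/
theorem sum_of_Gdegrees_eq_three_subdegree (G : ColoredGraph 5) (p : ℕ)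
    (hp : Fintype.card G.V = 2 * p) :
    (∑ c : Fin 5, G.omegaGhat c) = 3 * (G.subdegree p : ℚ) := by
  have hpairs : ∑ q ∈ (univ : Finset (Fin 5)).offDiag, (G.numResidues {q.1, q.2} : ℚ)
      = 2 * ∑ Δ ∈ univ.filter (fun Δ : Finset (Fin 5) => Δ.card = 2),
        (G.numResidues ↑Δ : ℚ) := by
    have h := sum_offDiag_pair univ fun Δ : Finset (Fin 5) => (G.numResidues ↑Δ : ℚ)
    simp only [coe_pair] at h
    rw [h, ← powerset_univ, ← powersetCard_eq_filter, nsmul_eq_mul, Nat.cast_ofNat]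
  simp only [ColoredGraph.omegaGhat_eq, sum_sub_distrib, sum_add_distrib, ← mul_sum]
  rw [sum_univ_sum_offDiag_erase fun q => (G.numResidues {q.1, q.2} : ℚ), hpairs,
    ColoredGraph.subdegree, hp]
  push_cast
  simp only [sum_const, card_univ, Fintype.card_fin, nsmul_eq_mul]
  ring
end
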